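/- arXiv:2203.11718 — 2 statements merged into one kernel-verified Lean document; each statement's English description precedes it below -/
import Mathlib

section
/- (Theorem 3.2 (iii), Jacobian of the absolute value) Under the Haar-type hypotheses, let û : Fin n → ℝ be such that every diagonal entry of D(û) is nonzero. Then the map α ↦ H · |D(α)| · Hᵀ e₀ (entrywise absolute value of the diagonal of D(α)) is Fréchet differentiable at û and its derivative is the linear map represented by the matrix H · sgn(D(û)) · Hᵀ. -/
open Matrix

/-
In the Haar basis every Galerkin matrix is diagonal, `Hᵀ P(α) H = diag(Λ α)` with `Λ` linear, and
`P(α) e₀ = α` gives `Hᵀ α = diag(Λ α) Hᵀ e₀`, i.e. `Hᵀ = diag(Hᵀ e₀) Λ`. Hence the map is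
`α ↦ H diag(Hᵀ e₀) |Λ α|`, and by the chain rule its derivative at `û` is `H diag(Hᵀ e₀) sgn(Λ û) Λ = H sgn(Λ û) diag(Hᵀ e₀) Λ = H sgn(D(û)) Hᵀ`.
-/

theorem Real.sign_eq_coe_sign (x : ℝ) : Real.sign x = (SignType.sign x : ℝ) := by
  rcases lt_trichotomy x 0 with hx | rfl | hx
  · simp [Real.sign_of_neg hx, _root_.sign_neg hx]
  · simp
  · simp [Real.sign_of_pos hx, sign_pos hx]

section Calculus

variable {l m n : Type*} [Fintype l] [Fintype m] [DecidableEq m] [Fintype n]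

theorem hasFDerivAt_abs_pi {x : m → ℝ} (hx : ∀ i, x i ≠ 0) :
    HasFDerivAt (fun y : m → ℝ => fun i => |y i|)
      (LinearMap.toContinuousLinearMap (mulVecLin (diagonal fun i => Real.sign (x i)))) x := by
  refine hasFDerivAt_pi'' fun i => ?_
  refine ((hasFDerivAt_apply i x).abs (hx i)).congr_fderiv ?_
  ext v
  simp [mulVec_diagonal, Real.sign_eq_coe_sign]

theorem hasFDerivAt_mulVec_abs_mulVec (A : Matrix l m ℝ) (B : Matrix m n ℝ) {x : n → ℝ}
    (hx : ∀ i, (B *ᵥ x) i ≠ 0) :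
    HasFDerivAt (fun y => A *ᵥ fun i => |(B *ᵥ y) i|)
      (LinearMap.toContinuousLinearMap
        (mulVecLin (A * diagonal (fun i => Real.sign ((B *ᵥ x) i)) * B))) x := by
  refine ((LinearMap.toContinuousLinearMap (mulVecLin A)).hasFDerivAt.comp x
    ((hasFDerivAt_abs_pi hx).comp x
      (LinearMap.toContinuousLinearMap (mulVecLin B)).hasFDerivAt)).congr_fderiv ?_
  ext v
  simp [mulVec_mulVec]

end Calculus

theorem Matrix.mul_diagonal_mul_mulVec {R l m r : Type*} [CommSemiring R] [Fintype m] [Fintype r]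
    [DecidableEq r] (A : Matrix l r R) (a : r → R) (B : Matrix r m R) (e : m → R) :
    (A * diagonal a * B) *ᵥ e = (A * diagonal (B *ᵥ e)) *ᵥ a := by
  simp only [← mulVec_mulVec]
  congr 1
  ext i
  simp [mulVec_diagonal, mul_comm]

section Galerkin

variable {R ι m r : Type*} [CommRing R] [Fintype ι] [Fintype m] [DecidableEq r]

def jointEigenvalues (H : Matrix m r R) (M : ι → Matrix m m R) : Matrix r ι R :=
  Matrix.of fun i k => (Hᵀ * M k * H) i i

theorem transpose_mul_sum_smul_mul_eq_diagonal {H : Matrix m r R} {M : ι → Matrix m m R}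
    (hdiag : ∀ k, (Hᵀ * M k * H).IsDiag) (α : ι → R) :
    Hᵀ * (∑ k, α k • M k) * H = diagonal (jointEigenvalues H M *ᵥ α) := by
  have hk : ∀ k, Hᵀ * M k * H = diagonal fun i => jointEigenvalues H M i k :=
    fun k => (hdiag k).diagonal_diag.symm
  simp only [Matrix.mul_sum, Matrix.sum_mul, Matrix.mul_smul, Matrix.smul_mul, hk]
  ext i j
  by_cases hij : i = j
  · subst hij; simp [mulVec, dotProduct, Matrix.sum_apply, mul_comm]
  · simp [Matrix.sum_apply, hij]

theorem sum_smul_mulVec_single [DecidableEq m] {M : m → Matrix m m R} {j : m} (hMj : M j = 1)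
    (hsym : ∀ α β : m → R, (∑ k, α k • M k) *ᵥ β = (∑ k, β k • M k) *ᵥ α) (α : m → R) :
    (∑ k, α k • M k) *ᵥ Pi.single j 1 = α := by
  rw [hsym]
  simp [Pi.single_apply, hMj]

theorem diagonal_mulVec_single_mul_jointEigenvalues [DecidableEq m] {H : Matrix m m R}
    {M : m → Matrix m m R} {e : m → R} (hH : Hᵀ * H = 1) (hdiag : ∀ k, (Hᵀ * M k * H).IsDiag)
    (he : ∀ α, (∑ k, α k • M k) *ᵥ e = α) :
    diagonal (Hᵀ *ᵥ e) * jointEigenvalues H M = Hᵀ := by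
  refine mulVec_injective (funext fun v => ?_)
  have hHHt : H * Hᵀ = 1 := mul_eq_one_comm.mp hH
  calc (diagonal (Hᵀ *ᵥ e) * jointEigenvalues H M) *ᵥ v
      = diagonal (jointEigenvalues H M *ᵥ v) *ᵥ (Hᵀ *ᵥ e) := by
        ext i; simp [← mulVec_mulVec, mulVec_diagonal, mul_comm]
    _ = (Hᵀ * (∑ k, v k • M k) * H * Hᵀ) *ᵥ e := by
        rw [transpose_mul_sum_smul_mul_eq_diagonal hdiag, mulVec_mulVec]
    _ = Hᵀ *ᵥ v := by
        rw [Matrix.mul_assoc _ H, hHHt, Matrix.mul_one, ← mulVec_mulVec, he]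

end Galerkin

theorem haar_sg_abs_jacobian_general {n : ℕ} [NeZero n]
    (M : Fin n → Matrix (Fin n) (Fin n) ℝ)
    (hM0 : M 0 = 1)
    (P : (Fin n → ℝ) → Matrix (Fin n) (Fin n) ℝ)
    (hP : ∀ uh, P uh = ∑ k, uh k • M k)
    (hsym : ∀ uh wh : Fin n → ℝ, (P uh).mulVec wh = (P wh).mulVec uh)
    (e0 : Fin n → ℝ) (he0 : e0 = Pi.single 0 1)
    (H : Matrix (Fin n) (Fin n) ℝ) (hH : Hᵀ * H = 1)
    (hdiag : ∀ k, (Hᵀ * M k * H).IsDiag)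
    (uh : Fin n → ℝ) (huh : ∀ i, (Hᵀ * P uh * H) i i ≠ 0) :
    HasFDerivAt
      (fun α : Fin n → ℝ =>
        (H * Matrix.diagonal (fun i => |(Hᵀ * P α * H) i i|) * Hᵀ).mulVec e0)
      (LinearMap.toContinuousLinearMap
        (Matrix.mulVecLin
          (H * Matrix.diagonal
            (fun i => Real.sign ((Hᵀ * P uh * H) i i)) * Hᵀ)))
      uh := by
  obtain rfl : P = fun α => ∑ k, α k • M k := funext hP
  subst he0
  set Λ := jointEigenvalues H M
  set c := Hᵀ *ᵥ Pi.single 0 1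
  have hΛ : diagonal c * Λ = Hᵀ :=
    diagonal_mulVec_single_mul_jointEigenvalues hH hdiag
      (sum_smul_mulVec_single hM0 hsym)
  have hderiv : H * diagonal c * diagonal (fun i => Real.sign ((Λ *ᵥ uh) i)) * Λ
      = H * diagonal (fun i => Real.sign ((Λ *ᵥ uh) i)) * Hᵀ := by
    rw [Matrix.mul_assoc H, (commute_diagonal _ _).eq, Matrix.mul_assoc, Matrix.mul_assoc, hΛ,
      ← Matrix.mul_assoc]
  simp only [transpose_mul_sum_smul_mul_eq_diagonal hdiag, diagonal_apply_eq] at huh ⊢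
  simp only [mul_diagonal_mul_mulVec H _ Hᵀ]
  rw [← hderiv]
  exact hasFDerivAt_mulVec_abs_mulVec (H * diagonal c) Λ huh

/-- Theorem 3.2 (iii), Jacobian of the absolute value: under the Haar-type
hypotheses, if every diagonal entry of `D(uh) := Hᵀ P(uh) H` is nonzero, then the
map `α ↦ H · |D(α)| · Hᵀ e₀` is Fréchet differentiable at `uh` with derivative
represented by the matrix `H · sgn(D(uh)) · Hᵀ`. -/
theorem haar_sg_abs_jacobian {n : ℕ} [NeZero n]
    (M : Fin n → Matrix (Fin n) (Fin n) ℝ)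
    (hMsymm : ∀ k, (M k).IsSymm) (hM0 : M 0 = 1)
    (P : (Fin n → ℝ) → Matrix (Fin n) (Fin n) ℝ)
    (hP : ∀ uh, P uh = ∑ k, uh k • M k)
    (hsym : ∀ uh wh : Fin n → ℝ, (P uh).mulVec wh = (P wh).mulVec uh)
    (e0 : Fin n → ℝ) (he0 : e0 = Pi.single 0 1)
    (H : Matrix (Fin n) (Fin n) ℝ) (hH : Hᵀ * H = 1)
    (hdiag : ∀ k, (Hᵀ * M k * H).IsDiag)
    (uh : Fin n → ℝ) (huh : ∀ i, (Hᵀ * P uh * H) i i ≠ 0) :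
    HasFDerivAt
      (fun α : Fin n → ℝ =>
        (H * Matrix.diagonal (fun i => |(Hᵀ * P α * H) i i|) * Hᵀ).mulVec e0)
      (LinearMap.toContinuousLinearMap
        (Matrix.mulVecLin
          (H * Matrix.diagonal
            (fun i => Real.sign ((Hᵀ * P uh * H) i i)) * Hᵀ)))
      uh :=
  haar_sg_abs_jacobian_general M hM0 P hP hsym e0 he0 H hH hdiag uh huh
end

section
/- (Corollary 4.1) Under the Haar-type hypotheses, define the Galerkin flux f̂(û) := û * û + û * ŝ(û), where ŝ(û) := H · sgn(D(û)) · Hᵀ e₀ and û * ŵ := P(û) ŵ. Then (a) f̂(û) = H · (D(û)² + |D(û)|) · Hᵀ e₀ for every û : Fin n → ℝ, and (b) if every diagonal entry of D(û) is nonzero, then f̂ is Fréchet differentiable at û and its derivative is the linear map represented by the matrix H · (2 • D(û) + sgn(D(û))) · Hᵀ, which equals 2 • P(û) + P(ŝ(û)). -/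
open Matrix

section OrthogonalConjugation

variable {ι R : Type*} [Fintype ι] [CommRing R] {H : Matrix ι ι R}

theorem conj_diagonal_mul_conj_diagonal [DecidableEq ι] (hH : Hᵀ * H = 1) (a b : ι → R) :
    H * diagonal a * Hᵀ * (H * diagonal b * Hᵀ) = H * diagonal (a * b) * Hᵀ := by
  calc H * diagonal a * Hᵀ * (H * diagonal b * Hᵀ)
      = H * diagonal a * (Hᵀ * H) * diagonal b * Hᵀ := by simp only [Matrix.mul_assoc]
    _ = H * diagonal (a * b) * Hᵀ := by
      rw [hH, Matrix.mul_one, Matrix.mul_assoc H, diagonal_mul_diagonal]; rfl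

theorem commute_conj_diagonal [DecidableEq ι] (hH : Hᵀ * H = 1) (a b : ι → R) :
    Commute (H * diagonal a * Hᵀ) (H * diagonal b * Hᵀ) := by
  rw [Commute, SemiconjBy, conj_diagonal_mul_conj_diagonal hH,
    conj_diagonal_mul_conj_diagonal hH, mul_comm]

theorem conj_diagonal_mulVec [DecidableEq ι] (a x : ι → R) :
    (H * diagonal a * Hᵀ) *ᵥ x = (H * diagonal (Hᵀ *ᵥ x)) *ᵥ a := by
  simp only [← mulVec_mulVec]
  congr 1
  ext i
  simp only [mulVec_diagonal, mul_comm]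

theorem smul_conj_diagonal_add_conj_diagonal [DecidableEq ι] (c : R) (a b : ι → R) :
    c • (H * diagonal a * Hᵀ) + H * diagonal b * Hᵀ
      = H * diagonal (fun i => c * a i + b i) * Hᵀ := by
  rw [← Matrix.smul_mul, ← Matrix.mul_smul, ← diagonal_smul, ← Matrix.add_mul, ← Matrix.mul_add,
    diagonal_add]
  rfl

theorem eq_conj_diagonal_of_isDiag_conj [DecidableEq ι] (hH : H * Hᵀ = 1) {X : Matrix ι ι R}
    (hX : (Hᵀ * X * H).IsDiag) : X = H * diagonal (fun i => (Hᵀ * X * H) i i) * Hᵀ := by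
  calc X = H * Hᵀ * X * (H * Hᵀ) := by rw [hH, Matrix.one_mul, Matrix.mul_one]
    _ = H * (Hᵀ * X * H) * Hᵀ := by simp only [Matrix.mul_assoc]
    _ = H * diagonal (fun i => (Hᵀ * X * H) i i) * Hᵀ := by
      congr 2; exact hX.diagonal_diag.symm

theorem isDiag_mul_sum_smul_mul {κ : Type*} [Fintype κ] (A B : Matrix ι ι R)
    {M : κ → Matrix ι ι R} (hM : ∀ k, (A * M k * B).IsDiag) (v : κ → R) :
    (A * (∑ k, v k • M k) * B).IsDiag := by
  simp only [Finset.mul_sum, Finset.sum_mul, Matrix.mul_smul, Matrix.smul_mul]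
  exact Finset.sum_induction _ IsDiag (fun _ _ => IsDiag.add) isDiag_zero
    fun k _ => (hM k).smul (v k)

theorem isLinearMap_diag_mul_sum_smul_mul {κ : Type*} [Fintype κ] (A B : Matrix ι ι R)
    (M : κ → Matrix ι ι R) :
    IsLinearMap R fun (v : κ → R) i => (A * (∑ k, v k • M k) * B) i i := by
  constructor
  · intro v w
    ext i
    simp [add_smul, Finset.sum_add_distrib, Matrix.mul_add, Matrix.add_mul]
  · intro c v
    ext i
    simp [← smul_smul, ← Finset.smul_sum]

end OrthogonalConjugation

theorem apply_mulVec_eq_of_forall_commute {ι R : Type*} [Fintype ι] [Semiring R]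
    {P : (ι → R) → Matrix ι ι R} {e0 : ι → R} (hsym : ∀ v w, P v *ᵥ w = P w *ᵥ v)
    (hunit : ∀ w, P w *ᵥ e0 = w) {Q : Matrix ι ι R} (hQ : ∀ w, Commute Q (P w)) :
    P (Q *ᵥ e0) = Q := by
  refine ext_iff_mulVec.mpr fun w => ?_
  calc P (Q *ᵥ e0) *ᵥ w = P w *ᵥ (Q *ᵥ e0) := hsym _ _
    _ = Q *ᵥ (P w *ᵥ e0) := by rw [mulVec_mulVec, mulVec_mulVec, (hQ w).eq]
    _ = Q *ᵥ w := by rw [hunit]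

theorem galerkin_flux_eq_conj_diagonal {ι : Type*} [Fintype ι] [DecidableEq ι]
    {P : (ι → ℝ) → Matrix ι ι ℝ} {e0 : ι → ℝ} {H : Matrix ι ι ℝ} (hH : Hᵀ * H = 1)
    {v a : ι → ℝ} (hv : P v *ᵥ e0 = v) (hPv : P v = H * diagonal a * Hᵀ) :
    P v *ᵥ v + P v *ᵥ ((H * diagonal (fun i => Real.sign (a i)) * Hᵀ) *ᵥ e0)
      = (H * diagonal (fun i => a i ^ 2 + |a i|) * Hᵀ) *ᵥ e0 := by
  set S := H * diagonal (fun i => Real.sign (a i)) * Hᵀ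
  calc P v *ᵥ v + P v *ᵥ (S *ᵥ e0) = (P v * P v + P v * S) *ᵥ e0 := by
        rw [add_mulVec, ← mulVec_mulVec e0 (P v) (P v), ← mulVec_mulVec e0 (P v) S, hv]
    _ = (H * diagonal (fun i => a i ^ 2 + |a i|) * Hᵀ) *ᵥ e0 := by
        rw [hPv, conj_diagonal_mul_conj_diagonal hH, conj_diagonal_mul_conj_diagonal hH,
          ← Matrix.add_mul, ← Matrix.mul_add, diagonal_add]
        congr 3
        funext i
        simp only [Pi.mul_apply, Real.sign_eq_coe_sign, self_mul_sign, sq]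

theorem hasDerivAt_sq_add_abs {x : ℝ} (hx : x ≠ 0) :
    HasDerivAt (fun y => y ^ 2 + |y|) (2 * x + Real.sign x) x := by
  have h := (hasDerivAt_pow 2 x).add (hasDerivAt_abs hx)
  rw [Real.sign_eq_coe_sign]
  norm_num at h
  exact h

theorem hasFDerivAt_comp_pi {ι : Type*} [Fintype ι] [DecidableEq ι] {g g' : ℝ → ℝ}
    {c : ι → ℝ} (hg : ∀ i, HasDerivAt g (g' (c i)) (c i)) :
    HasFDerivAt (fun x : ι → ℝ => fun i => g (x i))
      (mulVecLin (diagonal fun i => g' (c i))).toContinuousLinearMap c := by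
  refine hasFDerivAt_pi'' fun i =>
    ((hg i).comp_hasFDerivAt c (hasFDerivAt_apply i c)).congr_fderiv ?_
  ext w
  simp [mulVec_diagonal]

theorem hasFDerivAt_conj_diagonal_comp {ι : Type*} [Fintype ι] [DecidableEq ι]
    {H : Matrix ι ι ℝ} (hH : Hᵀ * H = 1) {e0 : ι → ℝ} (D : (ι → ℝ) →ₗ[ℝ] ι → ℝ)
    (hD : ∀ w, (H * diagonal (D w) * Hᵀ) *ᵥ e0 = w) {g g' : ℝ → ℝ} {u : ι → ℝ}
    (hg : ∀ i, HasDerivAt g (g' (D u i)) (D u i)) :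
    HasFDerivAt (fun v => (H * diagonal (fun i => g (D v i)) * Hᵀ) *ᵥ e0)
      (mulVecLin (H * diagonal (fun i => g' (D u i)) * Hᵀ)).toContinuousLinearMap u := by
  let A := (mulVecLin (H * diagonal (Hᵀ *ᵥ e0))).toContinuousLinearMap
  have h := A.hasFDerivAt.comp u
    ((hasFDerivAt_comp_pi hg).comp u D.toContinuousLinearMap.hasFDerivAt)
  rw [show (fun v => (H * diagonal (fun i => g (D v i)) * Hᵀ) *ᵥ e0)
      = A ∘ (fun x i => g (x i)) ∘ D from funext fun v => conj_diagonal_mulVec _ _]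
  refine h.congr_fderiv ?_
  ext1 w
  have hdiag : diagonal (fun i => g' (D u i)) *ᵥ D w = (fun i => g' (D u i)) * D w :=
    funext fun i => mulVec_diagonal _ _ _
  show (H * diagonal (Hᵀ *ᵥ e0)) *ᵥ (diagonal (fun i => g' (D u i)) *ᵥ D w) =
    (H * diagonal (fun i => g' (D u i)) * Hᵀ) *ᵥ w
  rw [hdiag, ← conj_diagonal_mulVec, ← conj_diagonal_mul_conj_diagonal hH, ← mulVec_mulVec, hD]

theorem haar_sg_lipschitz_flux_corollary_general {n : ℕ} [NeZero n]
    (M : Fin n → Matrix (Fin n) (Fin n) ℝ)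
    (hM0 : M 0 = 1)
    (P : (Fin n → ℝ) → Matrix (Fin n) (Fin n) ℝ)
    (hP : ∀ uh, P uh = ∑ k, uh k • M k)
    (hsym : ∀ uh wh : Fin n → ℝ, (P uh).mulVec wh = (P wh).mulVec uh)
    (e0 : Fin n → ℝ) (he0 : e0 = Pi.single 0 1)
    (H : Matrix (Fin n) (Fin n) ℝ) (hH : Hᵀ * H = 1)
    (hdiag : ∀ k, (Hᵀ * M k * H).IsDiag)
    (s : (Fin n → ℝ) → (Fin n → ℝ))
    (hs : ∀ uh, s uh = (H * Matrix.diagonal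
        (fun i => Real.sign ((Hᵀ * P uh * H) i i)) * Hᵀ).mulVec e0)
    (f : (Fin n → ℝ) → (Fin n → ℝ))
    (hf : ∀ uh, f uh = (P uh).mulVec uh + (P uh).mulVec (s uh)) :
    (∀ uh : Fin n → ℝ, f uh
        = (H * Matrix.diagonal
            (fun i => ((Hᵀ * P uh * H) i i) ^ 2 + |(Hᵀ * P uh * H) i i|)
          * Hᵀ).mulVec e0) ∧
    (∀ uh : Fin n → ℝ, (∀ i, (Hᵀ * P uh * H) i i ≠ 0) →
      H * Matrix.diagonal
          (fun i => 2 * ((Hᵀ * P uh * H) i i) + Real.sign ((Hᵀ * P uh * H) i i))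
        * Hᵀ = (2 : ℝ) • P uh + P (s uh) ∧
      HasFDerivAt f
        (LinearMap.toContinuousLinearMap
          (Matrix.mulVecLin ((2 : ℝ) • P uh + P (s uh)))) uh) := by
  have hunit : ∀ w, P w *ᵥ e0 = w := fun w => by
    rw [hsym, hP, he0]
    simp [hM0]
  have hPD : ∀ v, P v = H * diagonal (fun i => (Hᵀ * P v * H) i i) * Hᵀ := fun v =>
    eq_conj_diagonal_of_isDiag_conj (mul_eq_one_comm.mp hH)
      (by rw [hP]; exact isDiag_mul_sum_smul_mul _ _ hdiag v)
  have hPs : ∀ v, P (s v) = H * diagonal (fun i => Real.sign ((Hᵀ * P v * H) i i)) * Hᵀ :=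
    fun v => by
      rw [hs]
      exact apply_mulVec_eq_of_forall_commute hsym hunit fun w => by
        rw [hPD w]; exact commute_conj_diagonal hH _ _
  have hflux : ∀ v, f v = (H * diagonal
      (fun i => (Hᵀ * P v * H) i i ^ 2 + |(Hᵀ * P v * H) i i|) * Hᵀ) *ᵥ e0 := fun v => by
    rw [hf, hs]
    exact galerkin_flux_eq_conj_diagonal hH (hunit v) (hPD v)
  refine ⟨hflux, fun uh hne => ?_⟩
  have hjac : H * diagonal (fun i => 2 * (Hᵀ * P uh * H) i i + Real.sign ((Hᵀ * P uh * H) i i))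
      * Hᵀ = (2 : ℝ) • P uh + P (s uh) := by
    rw [← smul_conj_diagonal_add_conj_diagonal, ← hPD uh, hPs]
  refine ⟨hjac, ?_⟩
  have hlin : IsLinearMap ℝ fun v i => (Hᵀ * P v * H) i i := by
    simp only [hP]
    exact isLinearMap_diag_mul_sum_smul_mul _ _ M
  rw [← hjac, funext hflux]
  exact hasFDerivAt_conj_diagonal_comp (g := fun x => x ^ 2 + |x|)
    (g' := fun x => 2 * x + Real.sign x) hH (hlin.mk' _)
    (fun w => hPD w ▸ hunit w)
    fun i => hasDerivAt_sq_add_abs (hne i)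

/-- Corollary 4.1: under the Haar-type hypotheses, the Galerkin flux
`f(uh) := uh * uh + uh * s(uh)` with sign modes `s(uh) := H · sgn(D(uh)) · Hᵀ e₀`
satisfies (a) `f(uh) = H · (D(uh)² + |D(uh)|) · Hᵀ e₀` for every `uh`, and
(b) if every diagonal entry of `D(uh)` is nonzero then `f` is Fréchet
differentiable at `uh` with derivative represented by the matrix
`H · (2 D(uh) + sgn(D(uh))) · Hᵀ`, which equals `2 • P(uh) + P(s(uh))`. -/
theorem haar_sg_lipschitz_flux_corollary {n : ℕ} [NeZero n]
    (M : Fin n → Matrix (Fin n) (Fin n) ℝ)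
    (hMsymm : ∀ k, (M k).IsSymm) (hM0 : M 0 = 1)
    (P : (Fin n → ℝ) → Matrix (Fin n) (Fin n) ℝ)
    (hP : ∀ uh, P uh = ∑ k, uh k • M k)
    (hsym : ∀ uh wh : Fin n → ℝ, (P uh).mulVec wh = (P wh).mulVec uh)
    (e0 : Fin n → ℝ) (he0 : e0 = Pi.single 0 1)
    (H : Matrix (Fin n) (Fin n) ℝ) (hH : Hᵀ * H = 1)
    (hdiag : ∀ k, (Hᵀ * M k * H).IsDiag)
    (s : (Fin n → ℝ) → (Fin n → ℝ))
    (hs : ∀ uh, s uh = (H * Matrix.diagonal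
        (fun i => Real.sign ((Hᵀ * P uh * H) i i)) * Hᵀ).mulVec e0)
    (f : (Fin n → ℝ) → (Fin n → ℝ))
    (hf : ∀ uh, f uh = (P uh).mulVec uh + (P uh).mulVec (s uh)) :
    (∀ uh : Fin n → ℝ, f uh
        = (H * Matrix.diagonal
            (fun i => ((Hᵀ * P uh * H) i i) ^ 2 + |(Hᵀ * P uh * H) i i|)
          * Hᵀ).mulVec e0) ∧
    (∀ uh : Fin n → ℝ, (∀ i, (Hᵀ * P uh * H) i i ≠ 0) →
      H * Matrix.diagonal
          (fun i => 2 * ((Hᵀ * P uh * H) i i) + Real.sign ((Hᵀ * P uh * H) i i))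
        * Hᵀ = (2 : ℝ) • P uh + P (s uh) ∧
      HasFDerivAt f
        (LinearMap.toContinuousLinearMap
          (Matrix.mulVecLin ((2 : ℝ) • P uh + P (s uh)))) uh) :=
  haar_sg_lipschitz_flux_corollary_general M hM0 P hP hsym e0 he0 H hH hdiag s hs f hf
end
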